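/- Let 𝐂 be a locally cartesian closed category with finite products and X an object of 𝐂. If p : A → B is orthogonal to X, then the diagonal morphism δ_p : A → A ×_B A (the unique morphism into the pullback of p along itself whose compositions with both projections are the identity on A) is orthogonal to X. -/

import Mathlib

open CategoryTheory CategoryTheory.Limits MonoidalCategory

universe v u

/-- In a category with (chosen) finite products, a morphism `p : A ⟶ B` is
*orthogonal* to an object `X` if every commuting square whose left edge is a
projection `Y ⊗ X ⟶ Y` and whose right edge is `p` has a unique diagonal filler. -/
def OrthogonalTo {𝒞 : Type u} [Category.{v} 𝒞] [CartesianMonoidalCategory 𝒞]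
    {A B : 𝒞} (p : A ⟶ B) (X : 𝒞) : Prop :=
  ∀ (Y : 𝒞) (f : Y ⊗ X ⟶ A) (g : Y ⟶ B),
    f ≫ p = CartesianMonoidalCategory.fst Y X ≫ g →
      ∃! h : Y ⟶ A, CartesianMonoidalCategory.fst Y X ≫ h = f ∧ h ≫ p = g

/-! A square against the diagonal `δ_p` is a map `g : Y ⟶ A ×_B A` whose two components
agree on `Y ⊗ X`; they also agree after `p`, so uniqueness of fillers for `p` makes them
equal, i.e. `g` factors through `δ_p`. The filler for `δ_p` is unique because `δ_p` is a
split mono. -/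

namespace OrthogonalTo

open CartesianMonoidalCategory

variable {𝒞 : Type u} [Category.{v} 𝒞] [CartesianMonoidalCategory 𝒞] {A B X : 𝒞} {p : A ⟶ B}

theorem hom_ext (hp : OrthogonalTo p X) {Y : 𝒞} {h₁ h₂ : Y ⟶ A}
    (hX : fst Y X ≫ h₁ = fst Y X ≫ h₂) (hB : h₁ ≫ p = h₂ ≫ p) : h₁ = h₂ := by
  obtain ⟨h, -, huniq⟩ := hp Y (fst Y X ≫ h₁) (h₁ ≫ p) (Category.assoc _ _ _)
  exact (huniq h₁ ⟨rfl, rfl⟩).trans (huniq h₂ ⟨hX.symm, hB.symm⟩).symm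

theorem diagonal [HasPullback p p] (hp : OrthogonalTo p X) :
    OrthogonalTo (pullback.diagonal p) X := by
  intro Y f g hfg
  have hfst : fst Y X ≫ g ≫ pullback.fst p p = f := by
    rw [← Category.assoc, ← hfg, Category.assoc, pullback.diagonal_fst, Category.comp_id]
  have hsnd : fst Y X ≫ g ≫ pullback.snd p p = f := by
    rw [← Category.assoc, ← hfg, Category.assoc, pullback.diagonal_snd, Category.comp_id]
  have hfst_eq_snd : g ≫ pullback.fst p p = g ≫ pullback.snd p p :=
    hp.hom_ext (hfst.trans hsnd.symm) (by simp [pullback.condition])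
  refine ⟨g ≫ pullback.fst p p, ⟨hfst, ?_⟩, fun h ⟨_, hh⟩ => ?_⟩
  · exact pullback.hom_ext (by simp) (by simp [hfst_eq_snd])
  · rw [← hh, Category.assoc, pullback.diagonal_fst, Category.comp_id]

end OrthogonalTo

theorem statement_14_general {𝒞 : Type u} [Category.{v} 𝒞] [CartesianMonoidalCategory 𝒞]
    [HasPullbacks 𝒞]
    {A B : 𝒞} (p : A ⟶ B) (X : 𝒞) (hp : OrthogonalTo p X) :
    OrthogonalTo (pullback.diagonal p) X :=
  hp.diagonal

/-- In a locally cartesian closed category with finite products, if `p : A ⟶ B` is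
orthogonal to `X` then so is the diagonal morphism `A ⟶ A ×_B A`. -/
theorem statement_14 {𝒞 : Type u} [Category.{v} 𝒞] [CartesianMonoidalCategory 𝒞]
    [HasPullbacks 𝒞]
    (lcc : ∀ {Y Z : 𝒞} (g : Y ⟶ Z), (Over.pullback g).IsLeftAdjoint)
    {A B : 𝒞} (p : A ⟶ B) (X : 𝒞) (hp : OrthogonalTo p X) :
    OrthogonalTo (pullback.diagonal p) X :=
  statement_14_general p X hp
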